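/- arXiv:0908.1677 — 2 statements merged into one kernel-verified Lean document; each statement's English description precedes it below -/
import Mathlib

section
/- Let g(x,τ) = (2πτ)^{-1/2}·exp(−x²/(2τ)), fix γ ∈ ℝ, h > 0, l < 0, and define for c ∈ ℝ, τ > 0 the two-sided reflection series F(c,τ) = Σ_{m∈ℤ} [ e^{2γ(l−h)m}·g(c − γτ + 2(h−l)m, τ) − e^{2γ((h−l)m + l)}·g(c − γτ − 2l − 2(h−l)m, τ) ]. Then the series converges absolutely for every c ∈ ℝ and τ > 0, and F satisfies the absorbing boundary conditions at both levels: F(h,τ) = 0 and F(l,τ) = 0 for all τ > 0. -/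
/-!
Each term of the series is an exponential times a Gaussian in `m`, so the series is dominated by
`exp (-A m ^ 2 + B m)` with `A > 0`, a theta series. Splitting every term into its direct and its
reflected image, completing the square in the exponent shows that at `c = l` the reflected
image of index `m` equals the direct image of index `m`, while at `c = h` it equals
the direct image of index `m - 1`; so `F l τ` vanishes termwise and `F h τ` telescopes.
-/

/-- The Gaussian heat kernel `g(x,τ) = (2πτ)^{-1/2}·exp(−x²/(2τ))`. -/
noncomputable def gker (x τ : ℝ) : ℝ :=
  Real.exp (-x ^ 2 / (2 * τ)) / Real.sqrt (2 * Real.pi * τ)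

/-- The `m`-th term of the two-sided reflection series for drift `γ` and levels `h > 0 > l`. -/
noncomputable def reflTerm (γ h l c τ : ℝ) (m : ℤ) : ℝ :=
  Real.exp (2 * γ * (l - h) * (m : ℝ)) * gker (c - γ * τ + 2 * (h - l) * (m : ℝ)) τ
    - Real.exp (2 * γ * ((h - l) * (m : ℝ) + l))
        * gker (c - γ * τ - 2 * l - 2 * (h - l) * (m : ℝ)) τ

open Real

noncomputable def reflDirect (γ h l c τ : ℝ) (m : ℤ) : ℝ :=
  exp (2 * γ * (l - h) * m) * gker (c - γ * τ + 2 * (h - l) * m) τ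

noncomputable def reflImage (γ h l c τ : ℝ) (m : ℤ) : ℝ :=
  exp (2 * γ * ((h - l) * m + l)) * gker (c - γ * τ - 2 * l - 2 * (h - l) * m) τ

lemma reflTerm_eq_sub (γ h l c τ : ℝ) :
    reflTerm γ h l c τ = reflDirect γ h l c τ - reflImage γ h l c τ :=
  rfl

lemma exp_mul_gker (a x τ : ℝ) :
    exp a * gker x τ = exp (a - x ^ 2 / (2 * τ)) / √(2 * π * τ) := by
  rw [gker, ← mul_div_assoc, ← exp_add, sub_eq_add_neg, neg_div]

lemma summable_exp_neg_mul_sq_add_mul {A : ℝ} (hA : 0 < A) (B : ℝ) :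
    Summable fun n : ℤ => exp (-A * n ^ 2 + B * n) := by
  -- these are the moduli of the Jacobi theta terms at `z = -i B / (2π)`, `τ = i A / π`
  have hθ := ((summable_jacobiTheta₂_term_iff (Complex.ofReal (-(B / (2 * π))) * Complex.I)
    (Complex.ofReal (A / π) * Complex.I)).mpr (by simpa using div_pos hA pi_pos)).norm
  refine hθ.congr fun n => ?_
  rw [norm_jacobiTheta₂_term, Complex.mul_I_im, Complex.mul_I_im, Complex.ofReal_re, Complex.ofReal_re]
  congr 1
  field_simp
  ring

lemma summable_exp_mul_gker_affine {τ d : ℝ} (hτ : 0 < τ) (hd : d ≠ 0) (α b : ℝ) :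
    Summable fun m : ℤ => exp (α * m) * gker (b + d * m) τ := by
  have hA : 0 < d ^ 2 / (2 * τ) := by positivity
  refine ((summable_exp_neg_mul_sq_add_mul hA (α - b * d / τ)).mul_right
    (exp (-b ^ 2 / (2 * τ)) / √(2 * π * τ))).congr fun m => ?_
  rw [exp_mul_gker, mul_div_assoc', ← exp_add]
  congr 2
  field_simp
  ring

section

variable {γ h l c τ : ℝ}

lemma summable_reflDirect (hτ : 0 < τ) (hhl : h ≠ l) : Summable (reflDirect γ h l c τ) :=
  summable_exp_mul_gker_affine hτ (by simpa [sub_eq_zero] using hhl) _ _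

lemma summable_reflImage (hτ : 0 < τ) (hhl : h ≠ l) : Summable (reflImage γ h l c τ) := by
  have hd : -(2 * (h - l)) ≠ 0 := by simpa [sub_eq_zero] using hhl
  refine ((summable_exp_mul_gker_affine hτ hd (2 * γ * (h - l)) (c - γ * τ - 2 * l)).mul_left
    (exp (2 * γ * l))).congr fun m => ?_
  rw [reflImage, ← mul_assoc, ← exp_add]
  congr 2 <;> ring

lemma summable_reflTerm (hτ : 0 < τ) (hhl : h ≠ l) : Summable (reflTerm γ h l c τ) :=
  (summable_reflDirect hτ hhl).sub (summable_reflImage hτ hhl)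

lemma reflImage_upper (hτ : τ ≠ 0) (m : ℤ) :
    reflImage γ h l h τ m = reflDirect γ h l h τ (m - 1) := by
  rw [reflImage, reflDirect, exp_mul_gker, exp_mul_gker]
  congr 2
  push_cast
  field_simp
  ring

lemma reflImage_lower (hτ : τ ≠ 0) : reflImage γ h l l τ = reflDirect γ h l l τ := by
  funext m
  rw [reflImage, reflDirect, exp_mul_gker, exp_mul_gker]
  congr 2
  field_simp
  ring

end

lemma Summable.tsum_sub_comp_sub_one_eq_zero {α : Type*} [AddCommGroup α] [TopologicalSpace α]
    [IsTopologicalAddGroup α] [T2Space α] {f : ℤ → α} (hf : Summable f) :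
    ∑' m, (f m - f (m - 1)) = 0 := by
  have hf' : Summable fun m => f (m - 1) := (Equiv.subRight 1).summable_iff.mpr hf
  have hshift : ∑' m, f (m - 1) = ∑' m, f m := (Equiv.subRight 1).tsum_eq f
  rw [hf.tsum_sub hf', hshift, sub_self]

/-- the two-sided reflection series
`F(c,τ) = Σ_{m∈ℤ} [e^{2γ(l−h)m}·g(c−γτ+2(h−l)m, τ) − e^{2γ((h−l)m+l)}·g(c−γτ−2l−2(h−l)m, τ)]`
converges absolutely for every `c ∈ ℝ`, `τ > 0`, and vanishes at both absorbing
boundaries: `F(h,τ) = 0` and `F(l,τ) = 0` for all `τ > 0`. -/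
theorem two_sided_reflection_series_converges_and_vanishes_at_boundaries
    (γ h l : ℝ) (hh : 0 < h) (hl : l < 0)
    (F : ℝ → ℝ → ℝ)
    (hF : ∀ c τ : ℝ, F c τ = ∑' m : ℤ, reflTerm γ h l c τ m) :
    (∀ (c τ : ℝ), 0 < τ → Summable (fun m : ℤ => |reflTerm γ h l c τ m|)) ∧
    (∀ τ : ℝ, 0 < τ → F h τ = 0) ∧
    (∀ τ : ℝ, 0 < τ → F l τ = 0) := by
  have hhl : h ≠ l := (hl.trans hh).ne'
  refine ⟨fun c τ hτ => (summable_reflTerm hτ hhl).abs, fun τ hτ => ?_, fun τ hτ => ?_⟩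
  · rw [hF, reflTerm_eq_sub]
    simp only [Pi.sub_apply, reflImage_upper hτ.ne']
    exact (summable_reflDirect hτ hhl).tsum_sub_comp_sub_one_eq_zero
  · rw [hF, reflTerm_eq_sub, reflImage_lower hτ.ne', sub_self]
    exact tsum_zero
end

section
/- Let g(x,τ) = (2πτ)^{-1/2}·exp(−x²/(2τ)), fix γ ∈ ℝ, h > 0, l < 0, and define F(c,τ) = Σ_{m∈ℤ} [ e^{2γ(l−h)m}·g(c − γτ + 2(h−l)m, τ) − e^{2γ((h−l)m + l)}·g(c − γτ − 2l − 2(h−l)m, τ) ]. Then for every τ > 0 and l < c < h, F satisfies the advection–diffusion equation ∂F/∂τ + γ·∂F/∂c = (1/2)·∂²F/∂c². -/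
/-!
Every term of the series is a multiple of `g(c - γτ + s, τ)` for an image point `-s`, and such a
transported heat kernel solves `∂_τ u + γ ∂_c u = ½ ∂_c² u` because `g` solves the heat equation.
The weights grow at most like `exp(C|m|)` while the image points `s_m` are affine in `m` with
nonzero slope `±2(h - l)`, so on compact sets of `(c, τ)` with `τ > 0` the terms and their
derivatives are dominated by `exp(C|m| - δ m²)`; the series may therefore be differentiated
term by term.
-/

open Real Set Filter Topology

noncomputable def gkerDx (x t : ℝ) : ℝ := -(x / t) * gker x t

noncomputable def gkerDxx (x t : ℝ) : ℝ := ((x / t) ^ 2 - 1 / t) * gker x t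

lemma hasDerivAt_gker (t x : ℝ) : HasDerivAt (gker · t) (gkerDx x t) x := by
  have h : HasDerivAt (fun y => -y ^ 2 / (2 * t)) (-(2 * x) / (2 * t)) x := by
    simpa using (hasDerivAt_pow 2 x).neg.div_const (2 * t)
  refine (h.exp.div_const (√(2 * π * t))).congr_deriv ?_
  unfold gkerDx gker
  field_simp

lemma hasDerivAt_gkerDx (t x : ℝ) : HasDerivAt (gkerDx · t) (gkerDxx x t) x := by
  have h : HasDerivAt (fun y => -(y / t)) (-(1 / t)) x := ((hasDerivAt_id x).div_const t).neg
  refine (h.mul (hasDerivAt_gker t x)).congr_deriv ?_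
  unfold gkerDx gkerDxx
  ring

-- the heat equation `∂ₜ g = ½ ∂ₓ² g`, seen along `x = w - γ t`
lemma hasDerivAt_gker_moving (γ w : ℝ) {t : ℝ} (ht : 0 < t) :
    HasDerivAt (fun t => gker (w - γ * t) t)
      (1 / 2 * gkerDxx (w - γ * t) t - γ * gkerDx (w - γ * t) t) t := by
  have hx : HasDerivAt (fun t => -(w - γ * t) ^ 2 / (2 * t))
      ((2 * γ * (w - γ * t) * (2 * t) - -(w - γ * t) ^ 2 * 2) / (2 * t) ^ 2) t := by
    have h := (((hasDerivAt_id t).const_mul γ).const_sub w).pow 2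
    refine (h.neg.div ((hasDerivAt_id t).const_mul 2) (by positivity)).congr_deriv ?_
    simp only [id_eq, Pi.neg_apply, Pi.pow_apply]
    ring
  have hs : HasDerivAt (fun t => √(2 * π * t)) (√(2 * π * t) / (2 * t)) t := by
    refine (((hasDerivAt_id t).const_mul (2 * π)).sqrt (by positivity)).congr_deriv ?_
    field_simp
    exact (mul_self_sqrt (by positivity)).symm
  refine (hx.exp.div hs (by positivity)).congr_deriv ?_
  unfold gkerDx gkerDxx gker
  field_simp
  ring

def IsGaussianDominated (φ : ℝ → ℝ → ℝ) : Prop :=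
  ∀ t₀ t₁ : ℝ, 0 < t₀ → ∃ K, ∀ x, ∀ t ∈ Icc t₀ t₁, |φ x t| ≤ K * exp (-x ^ 2 / (4 * t₁))

namespace IsGaussianDominated

variable {φ ψ : ℝ → ℝ → ℝ}

lemma sub (hφ : IsGaussianDominated φ) (hψ : IsGaussianDominated ψ) :
    IsGaussianDominated fun x t => φ x t - ψ x t := by
  intro t₀ t₁ ht₀
  obtain ⟨K, hK⟩ := hφ t₀ t₁ ht₀
  obtain ⟨L, hL⟩ := hψ t₀ t₁ ht₀
  refine ⟨K + L, fun x t ht => ?_⟩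
  linarith [abs_sub (φ x t) (ψ x t), hK x t ht, hL x t ht]

lemma const_mul (hφ : IsGaussianDominated φ) (a : ℝ) :
    IsGaussianDominated fun x t => a * φ x t := by
  intro t₀ t₁ ht₀
  obtain ⟨K, hK⟩ := hφ t₀ t₁ ht₀
  refine ⟨|a| * K, fun x t ht => ?_⟩
  rw [abs_mul, mul_assoc]
  exact mul_le_mul_of_nonneg_left (hK x t ht) (abs_nonneg a)

end IsGaussianDominated

lemma one_add_sq_mul_gker_le {t₀ t₁ t : ℝ} (ht₀ : 0 < t₀) (ht : t ∈ Icc t₀ t₁) (x : ℝ) :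
    (1 + x ^ 2) * gker x t ≤ (1 + 4 * t₁) / √(2 * π * t₀) * exp (-x ^ 2 / (4 * t₁)) := by
  have ht₁ : 0 < t₁ := ht₀.trans_le (ht.1.trans ht.2)
  -- `1 + y ≤ exp y` at `y = x² / (4 t₁)` absorbs the polynomial factor into half of the decay
  have hpoly : 1 + x ^ 2 ≤ (1 + 4 * t₁) * exp (x ^ 2 / (4 * t₁)) := by
    have := add_one_le_exp (x ^ 2 / (4 * t₁))
    calc 1 + x ^ 2 ≤ (1 + 4 * t₁) * (x ^ 2 / (4 * t₁) + 1) := by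
          field_simp
          nlinarith [sq_nonneg x]
      _ ≤ _ := by gcongr
  have hdecay : exp (-x ^ 2 / (2 * t)) ≤ exp (-x ^ 2 / (2 * t₁)) := by
    rw [exp_le_exp, neg_div, neg_div, neg_le_neg_iff]
    exact div_le_div_of_nonneg_left (sq_nonneg x) (by linarith [ht.1]) (by linarith [ht.2])
  have hsqrt : √(2 * π * t₀) ≤ √(2 * π * t) := by gcongr; exact ht.1
  calc (1 + x ^ 2) * gker x t
      ≤ (1 + 4 * t₁) * exp (x ^ 2 / (4 * t₁)) * (exp (-x ^ 2 / (2 * t₁)) / √(2 * π * t₀)) := by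
        unfold gker
        gcongr
    _ = _ := by
        rw [mul_assoc, ← mul_div_assoc, ← exp_add]
        field_simp
        ring_nf

lemma isGaussianDominated_mul_gker {p : ℝ → ℝ → ℝ}
    (hp : ∀ t₀ t₁ : ℝ, 0 < t₀ → ∃ K, ∀ x, ∀ t ∈ Icc t₀ t₁, |p x t| ≤ K * (1 + x ^ 2)) :
    IsGaussianDominated fun x t => p x t * gker x t := by
  intro t₀ t₁ ht₀
  obtain ⟨K, hK⟩ := hp t₀ t₁ ht₀
  refine ⟨K * ((1 + 4 * t₁) / √(2 * π * t₀)), fun x t ht => ?_⟩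
  have hg : 0 ≤ gker x t := by unfold gker; positivity
  have hK0 : 0 ≤ K := nonneg_of_mul_nonneg_left ((abs_nonneg _).trans (hK x t ht)) (by positivity)
  calc |p x t * gker x t| = |p x t| * gker x t := by rw [abs_mul, abs_of_nonneg hg]
    _ ≤ K * ((1 + x ^ 2) * gker x t) := by rw [← mul_assoc]; gcongr; exact hK x t ht
    _ ≤ _ := by rw [mul_assoc]; exact mul_le_mul_of_nonneg_left (one_add_sq_mul_gker_le ht₀ ht x) hK0

lemma isGaussianDominated_gker : IsGaussianDominated gker := by
  simpa only [one_mul] using isGaussianDominated_mul_gker (p := fun _ _ => 1)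
    fun _ _ _ => ⟨1, fun x _ _ => by rw [abs_one, one_mul]; exact le_add_of_nonneg_right (sq_nonneg x)⟩

lemma isGaussianDominated_gkerDx : IsGaussianDominated gkerDx := by
  refine isGaussianDominated_mul_gker fun t₀ t₁ ht₀ => ⟨1 / t₀, fun x t ht => ?_⟩
  have ht' : 0 < t := ht₀.trans_le ht.1
  have hx : |x| ≤ 1 + x ^ 2 := by nlinarith [sq_abs x, sq_nonneg (|x| - 1)]
  rw [abs_neg, abs_div, abs_of_pos ht', one_div_mul_eq_div]
  exact div_le_div₀ (by positivity) hx ht₀ ht.1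

lemma isGaussianDominated_gkerDxx : IsGaussianDominated gkerDxx := by
  refine isGaussianDominated_mul_gker fun t₀ t₁ ht₀ => ⟨1 / t₀ ^ 2 + 1 / t₀, fun x t ht => ?_⟩
  have ht' : 0 < t := ht₀.trans_le ht.1
  have hx : (x / t) ^ 2 ≤ x ^ 2 / t₀ ^ 2 := by
    rw [div_pow]; exact div_le_div_of_nonneg_left (sq_nonneg x) (by positivity) (by gcongr; exact ht.1)
  have ht : 1 / t ≤ 1 / t₀ := one_div_le_one_div_of_le ht₀ ht.1
  calc |(x / t) ^ 2 - 1 / t| ≤ (x / t) ^ 2 + 1 / t := by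
        rw [abs_le]; constructor <;> nlinarith [sq_nonneg (x / t), one_div_pos.2 ht']
    _ ≤ x ^ 2 / t₀ ^ 2 + 1 / t₀ := add_le_add hx ht
    _ ≤ _ := by
        field_simp
        nlinarith [sq_nonneg x, ht₀]

section ImageSeries

variable {ι : Type*} {A s : ι → ℝ} {φ ψ : ℝ → ℝ → ℝ} {γ : ℝ}

def GaussianSummable (A s : ι → ℝ) : Prop :=
  ∀ b > 0, Summable fun m => |A m| * exp (-b * s m ^ 2)

/-- Superposition of the sources `φ` of weight `A m` placed at `-s m`, seen in the frame moving
with velocity `γ` (method of images). -/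
noncomputable def imageSeries (γ : ℝ) (A s : ι → ℝ) (φ : ℝ → ℝ → ℝ) (c τ : ℝ) : ℝ :=
  ∑' m, A m * φ (c - γ * τ + s m) τ

lemma IsGaussianDominated.exists_summable_bound (hφ : IsGaussianDominated φ)
    (hAs : GaussianSummable A s) {t₀ t₁ : ℝ} (ht₀ : 0 < t₀) (ht₀₁ : t₀ ≤ t₁) (R : ℝ) :
    ∃ u : ι → ℝ, Summable u ∧
      ∀ m v, |v| ≤ R → ∀ t ∈ Icc t₀ t₁, ‖A m * φ (v + s m) t‖ ≤ u m := by
  obtain ⟨K, hK⟩ := hφ t₀ t₁ ht₀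
  have ht₁ : 0 < t₁ := ht₀.trans_le ht₀₁
  refine ⟨fun m => K * exp (R ^ 2 / (4 * t₁)) * (|A m| * exp (-(1 / (8 * t₁)) * s m ^ 2)),
    (hAs _ (by positivity)).mul_left _, fun m v hv t ht => ?_⟩
  have hK0 : 0 ≤ K := nonneg_of_mul_nonneg_left ((abs_nonneg _).trans (hK 0 t ht)) (exp_pos _)
  -- `s² ≤ 2 (v + s)² + 2 v²`: a bounded shift costs only half of the Gaussian decay
  have hshift : exp (-(v + s m) ^ 2 / (4 * t₁))
      ≤ exp (R ^ 2 / (4 * t₁)) * exp (-(1 / (8 * t₁)) * s m ^ 2) := by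
    have hvR : v ^ 2 ≤ R ^ 2 := sq_le_sq' (abs_le.1 hv).1 (abs_le.1 hv).2
    rw [← exp_add, exp_le_exp]
    field_simp
    nlinarith [sq_nonneg (v + s m + v)]
  calc ‖A m * φ (v + s m) t‖ = |A m| * |φ (v + s m) t| := by rw [Real.norm_eq_abs, abs_mul]
    _ ≤ |A m| * (K * exp (-(v + s m) ^ 2 / (4 * t₁))) := by gcongr; exact hK _ t ht
    _ ≤ |A m| * (K * (exp (R ^ 2 / (4 * t₁)) * exp (-(1 / (8 * t₁)) * s m ^ 2))) := by gcongr
    _ = _ := by ring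

lemma IsGaussianDominated.summable_imageSeries_term (hφ : IsGaussianDominated φ)
    (hAs : GaussianSummable A s) (γ c : ℝ) {τ : ℝ} (hτ : 0 < τ) :
    Summable fun m => A m * φ (c - γ * τ + s m) τ := by
  obtain ⟨u, hu, hbound⟩ := hφ.exists_summable_bound hAs hτ le_rfl |c - γ * τ|
  exact hu.of_norm_bounded fun m => hbound m _ le_rfl τ ⟨le_rfl, le_rfl⟩

lemma imageSeries_mul_sub_mul {c τ : ℝ} (hφ : Summable fun m => A m * φ (c - γ * τ + s m) τ)
    (hψ : Summable fun m => A m * ψ (c - γ * τ + s m) τ) (a b : ℝ) :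
    imageSeries γ A s (fun x t => a * φ x t - b * ψ x t) c τ
      = a * imageSeries γ A s φ c τ - b * imageSeries γ A s ψ c τ := by
  unfold imageSeries
  rw [← tsum_mul_left, ← tsum_mul_left, ← (hφ.mul_left a).tsum_sub (hψ.mul_left b)]
  congr with m
  ring

lemma hasDerivAt_imageSeries_space (hAs : GaussianSummable A s) (hφ : IsGaussianDominated φ)
    (hψ : IsGaussianDominated ψ) (hderiv : ∀ t x, HasDerivAt (φ · t) (ψ x t) x)
    {τ : ℝ} (hτ : 0 < τ) (c : ℝ) :
    HasDerivAt (imageSeries γ A s φ · τ) (imageSeries γ A s ψ c τ) c := by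
  obtain ⟨u, hu, hbound⟩ := hψ.exists_summable_bound hAs hτ le_rfl (|c| + 1 + |γ * τ|)
  refine hasDerivAt_tsum_of_isPreconnected (g' := fun m y => A m * ψ (y - γ * τ + s m) τ) hu
    Metric.isOpen_ball (convex_ball c 1).isPreconnected (fun m y _ => ?_)
    (fun m y hy => hbound m _ ?_ τ ⟨le_rfl, le_rfl⟩) (Metric.mem_ball_self one_pos)
    (hφ.summable_imageSeries_term hAs γ c hτ) (Metric.mem_ball_self one_pos)
  · have hinner : HasDerivAt (fun y => y - γ * τ + s m) 1 y :=
      ((hasDerivAt_id y).sub_const _).add_const _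
    simpa using ((hderiv τ _).comp y hinner).const_mul (A m)
  · rw [Metric.mem_ball, Real.dist_eq] at hy
    linarith [abs_sub y (γ * τ), abs_sub_abs_le_abs_sub y c]

lemma hasDerivAt_imageSeries_time (hAs : GaussianSummable A s) (hφ : IsGaussianDominated φ)
    (hψ : IsGaussianDominated ψ)
    (hderiv : ∀ w t, 0 < t → HasDerivAt (fun t => φ (w - γ * t) t) (ψ (w - γ * t) t) t)
    {τ : ℝ} (hτ : 0 < τ) (c : ℝ) :
    HasDerivAt (imageSeries γ A s φ c ·) (imageSeries γ A s ψ c τ) τ := by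
  obtain ⟨u, hu, hbound⟩ := hψ.exists_summable_bound hAs (half_pos hτ)
    (show τ / 2 ≤ 2 * τ by linarith) (|c| + |γ| * (2 * τ))
  have hmem : τ ∈ Ioo (τ / 2) (2 * τ) := ⟨by linarith, by linarith⟩
  refine hasDerivAt_tsum_of_isPreconnected (g' := fun m y => A m * ψ (c - γ * y + s m) y) hu
    isOpen_Ioo isPreconnected_Ioo (fun m y hy => ?_)
    (fun m y hy => hbound m _ ?_ y ⟨hy.1.le, hy.2.le⟩) hmem
    (hφ.summable_imageSeries_term hAs γ c hτ) hmem
  · simp only [sub_add_eq_add_sub]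
    exact (hderiv _ y (by linarith [hy.1])).const_mul _
  · have hy0 : 0 < y := by linarith [hy.1]
    calc |c - γ * y| ≤ |c| + |γ * y| := abs_sub _ _
      _ = |c| + |γ| * y := by rw [abs_mul, abs_of_pos hy0]
      _ ≤ |c| + |γ| * (2 * τ) := by gcongr; exact hy.2.le

end ImageSeries

section HeatKernelImages

variable {ι : Type*} {A s : ι → ℝ} {γ τ : ℝ}

lemma hasDerivAt_imageSeries_gker_space (hAs : GaussianSummable A s) (hτ : 0 < τ) (c : ℝ) :
    HasDerivAt (imageSeries γ A s gker · τ) (imageSeries γ A s gkerDx c τ) c :=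
  hasDerivAt_imageSeries_space hAs isGaussianDominated_gker isGaussianDominated_gkerDx
    hasDerivAt_gker hτ c

lemma hasDerivAt_imageSeries_gkerDx_space (hAs : GaussianSummable A s) (hτ : 0 < τ) (c : ℝ) :
    HasDerivAt (imageSeries γ A s gkerDx · τ) (imageSeries γ A s gkerDxx c τ) c :=
  hasDerivAt_imageSeries_space hAs isGaussianDominated_gkerDx isGaussianDominated_gkerDxx
    hasDerivAt_gkerDx hτ c

lemma hasDerivAt_imageSeries_gker_time (hAs : GaussianSummable A s) (hτ : 0 < τ) (c : ℝ) :
    HasDerivAt (imageSeries γ A s gker c ·)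
      (1 / 2 * imageSeries γ A s gkerDxx c τ - γ * imageSeries γ A s gkerDx c τ) τ := by
  rw [← imageSeries_mul_sub_mul (isGaussianDominated_gkerDxx.summable_imageSeries_term hAs γ c hτ)
    (isGaussianDominated_gkerDx.summable_imageSeries_term hAs γ c hτ)]
  exact hasDerivAt_imageSeries_time hAs isGaussianDominated_gker
    ((isGaussianDominated_gkerDxx.const_mul _).sub (isGaussianDominated_gkerDx.const_mul _))
    (fun w _ ht => hasDerivAt_gker_moving γ w ht) hτ c

theorem imageSeries_gker_sub_advectionDiffusion {A' s' : ι → ℝ} (hAs : GaussianSummable A s)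
    (hAs' : GaussianSummable A' s') {u : ℝ → ℝ → ℝ}
    (hu : ∀ c τ, 0 < τ → u c τ = imageSeries γ A s gker c τ - imageSeries γ A' s' gker c τ)
    (hτ : 0 < τ) (c : ℝ) :
    deriv (fun τ' => u c τ') τ + γ * deriv (fun c' => u c' τ) c
      = 1 / 2 * deriv (fun c' => deriv (fun c'' => u c'' τ) c') c := by
  have htime : (fun τ' => u c τ') =ᶠ[𝓝 τ]
      fun τ' => imageSeries γ A s gker c τ' - imageSeries γ A' s' gker c τ' :=
    (eventually_gt_nhds hτ).mono fun τ' hτ' => hu c τ' hτ'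
  have hspace : deriv (fun c' => u c' τ)
      = fun c => imageSeries γ A s gkerDx c τ - imageSeries γ A' s' gkerDx c τ := funext fun c' => by
    rw [funext fun c'' => hu c'' τ hτ]
    exact ((hasDerivAt_imageSeries_gker_space hAs hτ c').fun_sub
      (hasDerivAt_imageSeries_gker_space hAs' hτ c')).deriv
  rw [htime.deriv_eq, hspace, ((hasDerivAt_imageSeries_gker_time hAs hτ c).fun_sub
      (hasDerivAt_imageSeries_gker_time hAs' hτ c)).deriv,
    ((hasDerivAt_imageSeries_gkerDx_space hAs hτ c).fun_sub
      (hasDerivAt_imageSeries_gkerDx_space hAs' hτ c)).deriv]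
  ring

end HeatKernelImages

lemma summable_exp_neg_mul_sq_add {β : ℝ} (hβ : 0 < β) (α κ : ℝ) :
    Summable fun n : ℤ => exp (-β * n ^ 2 + α * n + κ) := by
  -- these are, up to the factor `exp κ`, the norms of the Jacobi theta terms at
  -- `z = -iα/(2π)`, `τ = iβ/π`
  have := ((summable_jacobiTheta₂_term_iff ((-(α / (2 * π)) : ℝ) * Complex.I)
    ((β / π : ℝ) * Complex.I)).2 (by simp only [Complex.mul_I_im, Complex.ofReal_re]; positivity))
  refine (this.norm.mul_left (exp κ)).congr fun n => ?_
  rw [norm_jacobiTheta₂_term, ← exp_add]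
  simp only [Complex.mul_I_im, Complex.ofReal_re]
  field_simp
  ring_nf

lemma gaussianSummable_exp_affine (a e p : ℝ) {q : ℝ} (hq : q ≠ 0) :
    GaussianSummable (fun m : ℤ => exp (a * m + e)) (fun m => p + q * m) := by
  intro b hb
  refine (summable_exp_neg_mul_sq_add (by positivity : 0 < b * q ^ 2) (a - 2 * b * p * q)
    (e - b * p ^ 2)).congr fun m => ?_
  rw [abs_exp, ← exp_add]
  ring_nf

lemma gaussianSummable_reflection (γ : ℝ) {h l : ℝ} (hlh : l ≠ h) :
    GaussianSummable (fun m : ℤ => exp (2 * γ * (l - h) * m)) (fun m => 2 * (h - l) * m) ∧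
      GaussianSummable (fun m : ℤ => exp (2 * γ * ((h - l) * m + l)))
        (fun m => -2 * l - 2 * (h - l) * m) := by
  have hq : 2 * (h - l) ≠ 0 := mul_ne_zero two_ne_zero (sub_ne_zero.2 hlh.symm)
  constructor
  · intro b hb
    refine (gaussianSummable_exp_affine (2 * γ * (l - h)) 0 0 hq b hb).congr fun m => ?_
    ring_nf
  · intro b hb
    refine (gaussianSummable_exp_affine (2 * γ * (h - l)) (2 * γ * l) (-2 * l)
      (neg_ne_zero.2 hq) b hb).congr fun m => ?_
    ring_nf

theorem two_sided_reflection_series_satisfies_advection_diffusion_general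
    (γ h l : ℝ)
    (F : ℝ → ℝ → ℝ)
    (hF : ∀ c τ : ℝ, F c τ = ∑' m : ℤ, reflTerm γ h l c τ m) :
    ∀ (c τ : ℝ), 0 < τ → l < c → c < h →
      deriv (fun τ' => F c τ') τ + γ * deriv (fun c' => F c' τ) c
        = (1 / 2) * deriv (fun c' => deriv (fun c'' => F c'' τ) c') c := by
  intro c τ hτ hlc hch
  obtain ⟨h₁, h₂⟩ := gaussianSummable_reflection γ (hlc.trans hch).ne
  refine imageSeries_gker_sub_advectionDiffusion h₁ h₂ (fun c τ hτ => ?_) hτ c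
  rw [hF, imageSeries, imageSeries, ← Summable.tsum_sub
    (isGaussianDominated_gker.summable_imageSeries_term h₁ γ c hτ)
    (isGaussianDominated_gker.summable_imageSeries_term h₂ γ c hτ)]
  congr with m
  rw [reflTerm]
  ring_nf

/-- the two-sided reflection series `F(c,τ)` satisfies the
advection–diffusion equation `∂F/∂τ + γ·∂F/∂c = (1/2)·∂²F/∂c²` for every
`τ > 0` and `l < c < h`. -/
theorem two_sided_reflection_series_satisfies_advection_diffusion
    (γ h l : ℝ) (hh : 0 < h) (hl : l < 0)
    (F : ℝ → ℝ → ℝ)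
    (hF : ∀ c τ : ℝ, F c τ = ∑' m : ℤ, reflTerm γ h l c τ m) :
    ∀ (c τ : ℝ), 0 < τ → l < c → c < h →
      deriv (fun τ' => F c τ') τ + γ * deriv (fun c' => F c' τ) c
        = (1 / 2) * deriv (fun c' => deriv (fun c'' => F c'' τ) c') c :=
  two_sided_reflection_series_satisfies_advection_diffusion_general γ h l F hF
end
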